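/- Define R(c) = π₀ · √(2/π) · e^{-c²/2}/c + π_a · K · c/√n for constants π₀, π_a, K > 0 and c > 0. For each n, any minimizer c_n > 1 of R over (0, ∞) satisfies c_n² = log n + O(log log n); in particular c_n²/log n → 1 as n → ∞. -/

import Mathlib

/-!
Write `R(c) = A e^{-c²/2}/c + B c/√n`. At an interior minimiser the first-order condition reads
`e^{c²/2} = √n (A/B) (1 + c⁻²)`, i.e. `c² = log n + 2 log (A/B) + 2 log (1 + c⁻²)`, and for `c ≥ 1`
the last term lies in `(0, 2 log 2]`. So `c_n² - log n` is in fact bounded, which is stronger than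
`O(log log n)` and gives `c_n² / log n → 1` because `log n → ∞`.
-/

open Filter

/-- Leading-order integrated Bayes risk of the threshold test. -/
noncomputable def leadingRisk (p0 pa K : ℝ) (n : ℕ) (c : ℝ) : ℝ :=
  p0 * Real.sqrt (2 / Real.pi) * Real.exp (-c ^ 2 / 2) / c +
    pa * K * c / Real.sqrt n

open Real Set Asymptotics Topology

theorem hasDerivAt_exp_neg_sq_half_div {c : ℝ} (hc : c ≠ 0) :
    HasDerivAt (fun x => exp (-x ^ 2 / 2) / x) (-(exp (-c ^ 2 / 2) * (c ^ 2 + 1) / c ^ 2)) c := by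
  have hexp : HasDerivAt (fun x => exp (-x ^ 2 / 2)) (exp (-c ^ 2 / 2) * (-c)) c :=
    (((hasDerivAt_pow 2 c).neg.div_const 2).congr_deriv (by ring)).exp
  exact (hexp.div (hasDerivAt_id c) hc).congr_deriv (by simp only [id]; field_simp; ring)

theorem sq_eq_of_isMinOn {A B s c : ℝ} (hA : 0 < A) (hB : 0 < B) (hs : 0 < s) (hc : 0 < c)
    (hmin : IsMinOn (fun x => A * exp (-x ^ 2 / 2) / x + B * x / s) (Ioi 0) c) :
    c ^ 2 = 2 * log s + 2 * log (A / B) + 2 * log (1 + (c ^ 2)⁻¹) := by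
  have hderiv : HasDerivAt (fun x => A * exp (-x ^ 2 / 2) / x + B * x / s)
      (A * -(exp (-c ^ 2 / 2) * (c ^ 2 + 1) / c ^ 2) + B / s) c := by
    have := ((hasDerivAt_exp_neg_sq_half_div hc.ne').const_mul A).add
      (((hasDerivAt_id c).const_mul B).div_const s)
    exact (this.congr_deriv (by ring)).congr_of_eventuallyEq
      (.of_forall fun x => by simp only [Pi.add_apply, id]; ring)
  have hfoc := (hmin.isLocalMin (Ioi_mem_nhds hc)).hasDerivAt_eq_zero hderiv
  have hbalance : exp (c ^ 2 / 2) = s * (A / B) * (1 + (c ^ 2)⁻¹) := by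
    rw [neg_div, exp_neg] at hfoc
    field_simp at hfoc ⊢
    linarith
  have hlog := congrArg log hbalance
  rw [log_exp, log_mul (by positivity) (by positivity), log_mul (by positivity) (by positivity)]
    at hlog
  linarith

theorem log_one_add_inv_sq_mem_Ioc {c : ℝ} (hc : 1 ≤ c) :
    log (1 + (c ^ 2)⁻¹) ∈ Ioc 0 (log 2) := by
  have hinv_pos : 0 < (c ^ 2)⁻¹ := by positivity
  have hinv_le : (c ^ 2)⁻¹ ≤ 1 := inv_le_one_of_one_le₀ (one_le_pow₀ hc)
  exact ⟨log_pos (by linarith), log_le_log (by positivity) (by linarith)⟩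

theorem abs_sq_sub_log_le_of_isMinOn {A B s c : ℝ} (hA : 0 < A) (hB : 0 < B) (hs : 0 < s)
    (hc : 1 ≤ c)
    (hmin : IsMinOn (fun x => A * exp (-x ^ 2 / 2) / x + B * x / s) (Ioi 0) c) :
    |c ^ 2 - 2 * log s| ≤ 2 * |log (A / B)| + 2 * log 2 := by
  have hsq := sq_eq_of_isMinOn hA hB hs (by linarith) hmin
  obtain ⟨hpos, hle⟩ := log_one_add_inv_sq_mem_Ioc hc
  rw [abs_le]
  constructor <;> nlinarith [le_abs_self (log (A / B)), neg_abs_le (log (A / B))]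

theorem tendsto_div_nhds_one_of_abs_sub_le {α : Type*} {l : Filter α} {u v : α → ℝ} {C : ℝ}
    (hv : Tendsto v l atTop) (h : ∀ᶠ x in l, |u x - v x| ≤ C) :
    Tendsto (fun x => u x / v x) l (𝓝 1) := by
  have hbigO : (u - v) =O[l] (fun _ => (1 : ℝ)) :=
    IsBigO.of_bound C (h.mono fun x hx => by simpa using hx)
  have hlittleO : (fun _ => (1 : ℝ)) =o[l] v :=
    (isLittleO_one_left_iff ℝ).2 (tendsto_abs_atTop_atTop.comp hv)
  exact (isEquivalent_iff_tendsto_one (hv.eventually_ne_atTop 0)).1 (hbigO.trans_isLittleO hlittleO)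

theorem eventually_abs_sub_le_mul_log {α : Type*} {l : Filter α} {u v : α → ℝ} {C : ℝ}
    (hv : Tendsto v l atTop) (h : ∀ᶠ x in l, |u x - v x| ≤ C) :
    ∀ᶠ x in l, |u x - v x| ≤ C * log (v x) := by
  filter_upwards [h, (tendsto_log_atTop.comp hv).eventually_ge_atTop 1] with x hx hlog
  exact hx.trans (le_mul_of_one_le_right ((abs_nonneg _).trans hx) hlog)

theorem abs_sq_sub_log_le_of_isMinOn_leadingRisk {p0 pa K : ℝ} (hp0 : 0 < p0) (hpa : 0 < pa)
    (hK : 0 < K) {n : ℕ} (hn : 0 < n) {c : ℝ} (hc : 1 ≤ c)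
    (hmin : IsMinOn (leadingRisk p0 pa K n) (Ioi 0) c) :
    |c ^ 2 - log n| ≤ 2 * |log (p0 * √(2 / π) / (pa * K))| + 2 * log 2 := by
  have hn' : (0 : ℝ) < n := by exact_mod_cast hn
  have := abs_sq_sub_log_le_of_isMinOn (by positivity) (by positivity) (sqrt_pos.2 hn') hc hmin
  rwa [log_sqrt hn'.le, mul_div_cancel₀ _ two_ne_zero] at this

/-- The risk-minimizing threshold lies on the moderate deviation scale: any minimizer
`c_n > 1` of `R(c) = π₀ √(2/π) e^{-c²/2}/c + π_a K c/√n` over `(0,∞)` satisfies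
`c_n² = log n + O(log log n)`, and in particular `c_n²/log n → 1`. -/
theorem risk_minimizer_md_scale (p0 pa K : ℝ)
    (hp0 : 0 < p0) (hpa : 0 < pa) (hK : 0 < K)
    (c : ℕ → ℝ)
    (hc : ∀ n : ℕ, 2 ≤ n → 1 < c n ∧
      IsMinOn (leadingRisk p0 pa K n) (Set.Ioi 0) (c n)) :
    (∃ (C : ℝ) (N : ℕ), ∀ n : ℕ, N ≤ n →
        |c n ^ 2 - Real.log n| ≤ C * Real.log (Real.log n)) ∧
    Tendsto (fun n : ℕ => c n ^ 2 / Real.log n) atTop (nhds 1) := by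
  have hlog : Tendsto (fun n : ℕ => log n) atTop atTop :=
    tendsto_log_atTop.comp tendsto_natCast_atTop_atTop
  have hbound : ∀ᶠ n : ℕ in atTop,
      |c n ^ 2 - log n| ≤ 2 * |log (p0 * √(2 / π) / (pa * K))| + 2 * log 2 := by
    filter_upwards [eventually_ge_atTop 2] with n hn
    exact abs_sq_sub_log_le_of_isMinOn_leadingRisk hp0 hpa hK (by omega) (hc n hn).1.le
      (hc n hn).2
  exact ⟨⟨_, eventually_atTop.1 (eventually_abs_sub_le_mul_log hlog hbound)⟩,
    tendsto_div_nhds_one_of_abs_sub_le hlog hbound⟩
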